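/- arXiv:2211.12068 — 6 statements merged into one kernel-verified Lean document; each statement's English description precedes it below -/
import Mathlib

section
/- Let G be a group equipped with a bi-invariant linear order. Then G is locally indicable: every finitely generated subgroup H of G with H ≠ ⊥ admits a surjective group homomorphism onto the infinite cyclic group ℤ. -/
/-!
Let `H` be generated by a finite set `S` and choose `t > 1` with `|s|ₘ ≤ t` for all `s ∈ S`, so
that every element of `H` is bounded in absolute value by a power of `t`. The elements `x` with
`|x|ₘ ^ n < t` for all `n` form a subgroup `N` not containing `t`; bi-invariance makes it normal,
and every positive element outside `N` has powers that eventually pass `t`, so `H ⧸ N` is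
archimedean. Hölder's argument, run in `H` modulo `N`, shows that `H ⧸ N` is abelian. It is also
torsion-free and finitely generated, hence free abelian of positive rank, and a coordinate
function gives the surjection onto `ℤ`.
-/

open Function
open scoped commutatorElement

section BiOrderedGroup

variable {G : Type*} [Group G] [LinearOrder G] [MulLeftMono G]

theorem mabs_pow' (x : G) (n : ℕ) : |x ^ n|ₘ = |x|ₘ ^ n := by
  rcases le_total 1 x with hx | hx
  · rw [mabs_of_one_le hx, mabs_of_one_le (one_le_pow_of_one_le' hx n)]
  · rw [mabs_of_le_one hx, mabs_of_le_one (pow_le_one' hx n), inv_pow]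

theorem zpow_right_strictMono' {a : G} (ha : 1 < a) : StrictMono fun n : ℤ ↦ a ^ n :=
  strictMono_int_of_lt_succ fun n ↦ by rw [zpow_add_one]; exact lt_mul_of_one_lt_right' _ ha

variable [MulRightMono G]

theorem mabs_conj (g x : G) : |g * x * g⁻¹|ₘ = g * |x|ₘ * g⁻¹ := by
  have hmono : Monotone fun y ↦ g * y * g⁻¹ := fun a b h ↦
    mul_le_mul_left (mul_le_mul_right h g) g⁻¹
  rw [mabs, mabs, hmono.map_sup]
  group

theorem mabs_mul_le_mul_of_commute {x y a b : G} (hx : |x|ₘ ≤ a) (hy : |y|ₘ ≤ b)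
    (hab : Commute a b) : |x * y|ₘ ≤ a * b := by
  rw [mabs_le'] at hx hy ⊢
  refine ⟨mul_le_mul' hx.1 hy.1, ?_⟩
  rw [mul_inv_rev, hab.eq]
  exact mul_le_mul' hy.2 hx.2

theorem exists_zpow_le_lt_zpow_add_one {ε : G} (hε : 1 < ε) (hcof : ∀ y, ∃ n : ℕ, y ≤ ε ^ n)
    (g : G) : ∃ m : ℤ, ε ^ m ≤ g ∧ g < ε ^ (m + 1) := by
  have hmono := zpow_right_strictMono' hε
  obtain ⟨n, hn⟩ := hcof g
  obtain ⟨n', hn'⟩ := hcof g⁻¹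
  have hbdd : ∃ b : ℤ, ∀ z : ℤ, ε ^ z ≤ g → z ≤ b :=
    ⟨n, fun z hz ↦ hmono.le_iff_le.mp (by simpa using hz.trans hn)⟩
  have hne : ∃ z : ℤ, ε ^ z ≤ g := ⟨-n', by simpa using inv_le_of_inv_le' hn'⟩
  obtain ⟨m, hm, hmax⟩ := Int.exists_greatest_of_bdd hbdd hne
  exact ⟨m, hm, lt_of_not_ge fun h ↦ by linarith [hmax _ h]⟩

theorem commutatorElement_lt_sq {ε : G} (hε : 1 < ε) (hcof : ∀ y, ∃ n : ℕ, y ≤ ε ^ n)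
    (a b : G) : ⁅a, b⁆ < ε ^ 2 := by
  obtain ⟨m, ham, ham'⟩ := exists_zpow_le_lt_zpow_add_one hε hcof a
  obtain ⟨n, hbn, hbn'⟩ := exists_zpow_le_lt_zpow_add_one hε hcof b
  calc ⁅a, b⁆ = a * b * a⁻¹ * b⁻¹ := commutatorElement_def a b
    _ < ε ^ (m + 1) * ε ^ (n + 1) * (ε ^ m)⁻¹ * (ε ^ n)⁻¹ :=
      mul_lt_mul_of_lt_of_le (mul_lt_mul_of_lt_of_le (mul_lt_mul_of_lt_of_lt ham' hbn')
        (inv_le_inv_iff.mpr ham)) (inv_le_inv_iff.mpr hbn)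
    _ = ε ^ 2 := by group

section Holder

variable {N : Subgroup G} [N.Normal]

theorem exists_notMem_one_lt_sq_le {c d : G} (hdN : d ∉ N) (hd : 1 < d) (hdc : d < c)
    (hdcN : d⁻¹ * c ∉ N) : ∃ ε ∉ N, 1 < ε ∧ ε ^ 2 ≤ c := by
  rcases le_or_gt (d ^ 2) c with hsq | hsq
  · exact ⟨d, hdN, hd, hsq⟩
  refine ⟨c * d⁻¹, fun h ↦ hdcN (‹N.Normal›.mem_comm_iff.mp h), ?_, ?_⟩
  · simpa [← div_eq_mul_inv] using one_lt_div'.mpr hdc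
  · have : d⁻¹ * c * d⁻¹ ≤ 1 := by
      simpa [sq, mul_assoc] using mul_le_mul_left (mul_le_mul_right hsq.le d⁻¹) d⁻¹
    calc (c * d⁻¹) ^ 2 = c * (d⁻¹ * c * d⁻¹) := by simp only [sq, mul_assoc]
      _ ≤ c := mul_le_of_le_one_right' this

theorem exists_mk_eq_zpow_of_forall_inv_mul_mem {c : G} (hc : 1 < c)
    (hcof : ∀ y, ∃ n : ℕ, y ≤ c ^ n) (hgap : ∀ d ∉ N, 1 < d → d < c → d⁻¹ * c ∈ N) (g : G) :
    ∃ m : ℤ, (g : G ⧸ N) = (c : G ⧸ N) ^ m := by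
  obtain ⟨m, hm, hm'⟩ := exists_zpow_le_lt_zpow_add_one hc hcof g
  have hu : 1 ≤ (c ^ m)⁻¹ * g := by simpa using mul_le_mul_right hm (c ^ m)⁻¹
  have hu' : (c ^ m)⁻¹ * g < c := by
    simpa [zpow_add_one, mul_assoc] using mul_lt_mul_right hm' (c ^ m)⁻¹
  by_cases huN : (c ^ m)⁻¹ * g ∈ N
  · refine ⟨m, ?_⟩
    rw [← QuotientGroup.mk_zpow, QuotientGroup.eq, ← inv_mem_iff]
    simpa using huN
  · refine ⟨m + 1, ?_⟩
    have := hgap _ huN (hu.lt_of_ne fun h ↦ huN (h ▸ one_mem N)) hu'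
    rw [← QuotientGroup.mk_zpow, QuotientGroup.eq]
    simpa [zpow_add_one, mul_assoc] using this

/-- Hölder's theorem relative to `N`: for `N = ⊥` it says that an archimedean bi-ordered group is
abelian. -/
theorem commutatorElement_mem_of_cofinal (hcof : ∀ ε ∉ N, 1 < ε → ∀ y, ∃ n : ℕ, y ≤ ε ^ n)
    (a b : G) : ⁅a, b⁆ ∈ N := by
  suffices key : ∀ a b : G, 1 < ⁅a, b⁆ → ⁅a, b⁆ ∈ N by
    rcases lt_trichotomy ⁅a, b⁆ 1 with h | h | h
    · have h' := one_lt_inv'.mpr h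
      rw [commutatorElement_inv] at h'
      rw [← inv_mem_iff, commutatorElement_inv]
      exact key b a h'
    · exact h ▸ one_mem N
    · exact key a b h
  intro a b hc
  by_contra hcN
  -- Either `G ⧸ N` is cyclic, generated by the image of `c = ⁅a, b⁆`, or `c` dominates the
  -- square of some `ε > 1` outside `N`, which no commutator does.
  by_cases hgap : ∀ d ∉ N, 1 < d → d < ⁅a, b⁆ → d⁻¹ * ⁅a, b⁆ ∈ N
  · obtain ⟨p, hp⟩ := exists_mk_eq_zpow_of_forall_inv_mul_mem hc (hcof _ hcN hc) hgap a
    obtain ⟨q, hq⟩ := exists_mk_eq_zpow_of_forall_inv_mul_mem hc (hcof _ hcN hc) hgap b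
    apply hcN
    rw [← QuotientGroup.eq_one_iff, ← QuotientGroup.mk'_apply, map_commutatorElement,
      QuotientGroup.mk'_apply, QuotientGroup.mk'_apply, hp, hq,
      commutatorElement_eq_one_iff_commute]
    exact Commute.zpow_zpow_self _ p q
  · push Not at hgap
    obtain ⟨d, hdN, hd, hdc, hdcN⟩ := hgap
    obtain ⟨ε, hεN, hε, hεc⟩ := exists_notMem_one_lt_sq_le hdN hd hdc hdcN
    exact (commutatorElement_lt_sq hε (hcof ε hεN hε) a b).not_ge hεc

end Holder

theorem conj_lt_of_forall_pow_lt {t h a : G} {k : ℕ} (hh : |h|ₘ ≤ t ^ k)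
    (ha : ∀ i : ℕ, a ^ i < t) : h * a * h⁻¹ < t := by
  by_contra! hta
  have hh' := mabs_le'.mp hh
  have : t ^ (2 * k + 1) < t ^ (2 * k + 1) :=
    calc t ^ (2 * k + 1) ≤ (h * a * h⁻¹) ^ (2 * k + 1) := pow_le_pow_left' hta _
      _ = h * a ^ (2 * k + 1) * h⁻¹ := conj_pow
      _ < t ^ k * t * t ^ k :=
        mul_lt_mul_of_lt_of_le (mul_lt_mul_of_le_of_lt hh'.1 (ha _)) hh'.2
      _ = t ^ (2 * k + 1) := by rw [← pow_succ, ← pow_add]; ring_nf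
  exact this.false

def infinitesimalSubgroup (t : G) (ht : 1 < t) : Subgroup G where
  carrier := {x | ∀ n : ℕ, |x|ₘ ^ n < t}
  one_mem' n := by simpa using ht
  inv_mem' {x} hx := by simpa using hx
  mul_mem' {x y} hx hy n := by
    have hxy : |x * y|ₘ ≤ max |x|ₘ |y|ₘ ^ 2 :=
      sq (max |x|ₘ |y|ₘ) ▸ mabs_mul_le_mul_of_commute (le_max_left _ _) (le_max_right _ _)
        (Commute.refl _)
    calc |x * y|ₘ ^ n ≤ max |x|ₘ |y|ₘ ^ (2 * n) :=
          pow_mul (max |x|ₘ |y|ₘ) 2 n ▸ pow_le_pow_left' hxy n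
      _ < t := by rcases max_choice |x|ₘ |y|ₘ with h | h <;> rw [h] <;> simp_all

section infinitesimalSubgroup

variable {t : G} {ht : 1 < t}

theorem mem_infinitesimalSubgroup {x : G} :
    x ∈ infinitesimalSubgroup t ht ↔ ∀ n : ℕ, |x|ₘ ^ n < t := Iff.rfl

theorem notMem_infinitesimalSubgroup_self : t ∉ infinitesimalSubgroup t ht := fun h ↦ by
  simpa [mabs_of_one_lt ht] using h 1

theorem mem_infinitesimalSubgroup_of_pow_mem {x : G} {n : ℕ} (hn : n ≠ 0)
    (hx : x ^ n ∈ infinitesimalSubgroup t ht) : x ∈ infinitesimalSubgroup t ht := fun m ↦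
  calc |x|ₘ ^ m ≤ |x|ₘ ^ (n * m) :=
        pow_le_pow_right' (one_le_mabs x) (Nat.le_mul_of_pos_left m (Nat.pos_of_ne_zero hn))
    _ < t := by simpa [mabs_pow', pow_mul] using hx m

theorem infinitesimalSubgroup_normal (hdom : ∀ g : G, ∃ k : ℕ, |g|ₘ ≤ t ^ k) :
    (infinitesimalSubgroup t ht).Normal where
  conj_mem x hx h n := by
    obtain ⟨k, hk⟩ := hdom h
    rw [mabs_conj, conj_pow]
    exact conj_lt_of_forall_pow_lt hk fun i ↦ by simpa [← pow_mul] using hx (n * i)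

theorem pow_cofinal_of_notMem_infinitesimalSubgroup (hdom : ∀ g : G, ∃ k : ℕ, |g|ₘ ≤ t ^ k)
    {ε : G} (hεN : ε ∉ infinitesimalSubgroup t ht) (hε : 1 < ε) (y : G) :
    ∃ n : ℕ, y ≤ ε ^ n := by
  obtain ⟨n, hn⟩ : ∃ n : ℕ, t ≤ ε ^ n := by
    simpa [mem_infinitesimalSubgroup, mabs_of_one_lt hε] using hεN
  obtain ⟨k, hk⟩ := hdom y
  refine ⟨n * k, ?_⟩
  calc y ≤ |y|ₘ := le_mabs_self y
    _ ≤ t ^ k := hk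
    _ ≤ ε ^ (n * k) := pow_mul ε n k ▸ pow_le_pow_left' hn k

end infinitesimalSubgroup

theorem Group.FG.exists_forall_mabs_le_pow (hfg : Group.FG G) :
    ∃ t : G, ∀ g : G, ∃ k : ℕ, |g|ₘ ≤ t ^ k := by
  obtain ⟨S, hS⟩ := hfg.out
  obtain ⟨t, ht⟩ := Finset.exists_le (insert 1 (S.image fun s ↦ |s|ₘ))
  refine ⟨t, fun g ↦ ?_⟩
  induction (hS ▸ Subgroup.mem_top g : g ∈ Subgroup.closure (S : Set G)) using
    Subgroup.closure_induction with
  | mem s hs =>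
    exact ⟨1, by simpa using ht _ (Finset.mem_insert_of_mem (Finset.mem_image_of_mem _ hs))⟩
  | one => exact ⟨0, by simp⟩
  | mul x y _ _ hx hy =>
    obtain ⟨k, hk⟩ := hx
    obtain ⟨l, hl⟩ := hy
    exact ⟨k + l, pow_add t k l ▸ mabs_mul_le_mul_of_commute hk hl (Commute.pow_pow_self t k l)⟩
  | inv x _ hx => simpa using hx

end BiOrderedGroup

theorem CommGroup.exists_surjective_multiplicative_int {Q : Type*} [CommGroup Q] [Group.FG Q]
    [IsMulTorsionFree Q] [Nontrivial Q] : ∃ φ : Q →* Multiplicative ℤ, Surjective φ := by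
  have : Module.Finite ℤ (Additive Q) :=
    Module.Finite.iff_addGroup_fg.mpr (GroupFG.iff_add_fg.mp ‹_›)
  let b := Module.Free.chooseBasis ℤ (Additive Q)
  obtain ⟨i⟩ := b.index_nonempty
  refine ⟨AddMonoidHom.toMultiplicative (b.coord i).toAddMonoidHom,
    fun z ↦ ⟨(z.toAdd • b i).toMul, ?_⟩⟩
  change Multiplicative.ofAdd (b.coord i (z.toAdd • b i)) = z
  simp

theorem Group.FG.exists_surjective_multiplicative_int {G : Type*} [Group G] [LinearOrder G]
    [MulLeftMono G] [MulRightMono G] [Nontrivial G] (hfg : Group.FG G) :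
    ∃ φ : G →* Multiplicative ℤ, Surjective φ := by
  obtain ⟨t, hdom⟩ := hfg.exists_forall_mabs_le_pow
  have ht : 1 < t := by
    obtain ⟨g, hg⟩ := exists_ne (1 : G)
    obtain ⟨k, hk⟩ := hdom g
    by_contra! ht
    exact hg (mabs_le_one.mp (hk.trans (pow_le_one' ht k)))
  let N := infinitesimalSubgroup t ht
  have : N.Normal := infinitesimalSubgroup_normal hdom
  let _ : CommGroup (G ⧸ N) :=
    { mul_comm := by
        intro x y
        obtain ⟨a, rfl⟩ := QuotientGroup.mk'_surjective N x
        obtain ⟨b, rfl⟩ := QuotientGroup.mk'_surjective N y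
        refine commutatorElement_eq_one_iff_commute.mp ?_
        rw [← map_commutatorElement, QuotientGroup.mk'_apply, QuotientGroup.eq_one_iff]
        exact commutatorElement_mem_of_cofinal
          (fun _ ↦ pow_cofinal_of_notMem_infinitesimalSubgroup hdom) a b }
  have : IsMulTorsionFree (G ⧸ N) := IsMulTorsionFree.of_not_isOfFinOrder fun x hx hfin ↦ by
    obtain ⟨n, hn, hxn⟩ := hfin.exists_pow_eq_one
    obtain ⟨g, rfl⟩ := QuotientGroup.mk_surjective x
    rw [← QuotientGroup.mk_pow, QuotientGroup.eq_one_iff] at hxn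
    exact hx ((QuotientGroup.eq_one_iff g).mpr (mem_infinitesimalSubgroup_of_pow_mem hn.ne' hxn))
  have : Nontrivial (G ⧸ N) :=
    ⟨⟨t, 1, fun h ↦ notMem_infinitesimalSubgroup_self ((QuotientGroup.eq_one_iff t).mp h)⟩⟩
  obtain ⟨φ, hφ⟩ := CommGroup.exists_surjective_multiplicative_int (Q := G ⧸ N)
  exact ⟨φ.comp (QuotientGroup.mk' N), hφ.comp (QuotientGroup.mk'_surjective N)⟩

instance Subgroup.mulLeftMono {G : Type*} [Group G] [Preorder G] [MulLeftMono G]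
    (H : Subgroup G) : MulLeftMono H :=
  ⟨fun c _ _ h ↦ mul_le_mul_right (α := G) h c⟩

instance Subgroup.mulRightMono {G : Type*} [Group G] [Preorder G] [MulRightMono G]
    (H : Subgroup G) : MulRightMono H :=
  ⟨fun c _ _ h ↦ mul_le_mul_left (α := G) h c⟩

/-- A group equipped with a bi-invariant linear order is locally indicable: every
nontrivial finitely generated subgroup admits a surjective homomorphism onto `ℤ`. -/
theorem biordered_locally_indicable {G : Type*} [Group G] [LinearOrder G]
    [MulLeftStrictMono G] [MulRightStrictMono G]
    (H : Subgroup G) (hfg : Group.FG H) (hne : H ≠ ⊥) :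
    ∃ φ : H →* Multiplicative ℤ, Function.Surjective φ := by
  have := mulLeftMono_of_mulLeftStrictMono G
  have := mulRightMono_of_mulRightStrictMono G
  have := (Subgroup.nontrivial_iff_ne_bot H).mpr hne
  exact hfg.exists_surjective_multiplicative_int
end

section
/- Let G be a locally indicable group, i.e. every nontrivial finitely generated subgroup of G admits a surjective group homomorphism onto ℤ. Then G admits a left-invariant linear order: there exists a strict total order < on G such that for all a, b, c ∈ G, b < c implies a·b < a·c. -/
/-!
Burns–Hale argument. A subsemigroup `S` with `1 ∉ S` that contains `g` or `g⁻¹` for every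
`g ≠ 1` is the positive cone of the left-invariant order `a < b ↔ a⁻¹ * b ∈ S`. By compactness
of the Cantor space `G → Bool` it suffices to find such an `S` deciding the elements of each
finite set `F`. For this, let `φ` map `⟨F⟩` onto `ℤ`; the elements of `F` in `ker φ` form a
proper subset, decided by some `S₀` by induction, and then `F` is decided by the lexicographic
cone `{h ∈ ⟨F⟩ | φ h > 0, or φ h = 0 and h ∈ S₀}`.
-/

def LocallyIndicable (G : Type*) [Group G] : Prop :=
  ∀ H : Subgroup G, Group.FG H → H ≠ ⊥ → ∃ φ : H →* Multiplicative ℤ, Function.Surjective φ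

theorem Subgroup.exists_mem_notMem_map_ker_of_ne_one {G M : Type*} [Group G] [Monoid M]
    {s : Set G} {φ : Subgroup.closure s →* M} (hφ : φ ≠ 1) :
    ∃ g ∈ s, g ∉ φ.ker.map (Subgroup.closure s).subtype := by
  by_contra! h
  refine hφ (MonoidHom.eq_of_eqOn_dense Subgroup.closure_closure_coe_preimage fun x hx => ?_)
  obtain ⟨y, hy, hyx⟩ := Subgroup.mem_map.1 (h x hx)
  obtain rfl : y = x := Subtype.ext hyx
  exact hy

namespace Subsemigroup

variable {G : Type*} [Group G]

def IsConeOn (S : Subsemigroup G) (F : Set G) : Prop :=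
  (1 : G) ∉ S ∧ ∀ g ∈ F, g ≠ 1 → g ∈ S ∨ g⁻¹ ∈ S

theorem IsConeOn.exists_leftInvariant_strictTotalOrder {S : Subsemigroup G}
    (hS : S.IsConeOn Set.univ) :
    ∃ r : G → G → Prop, IsStrictTotalOrder G r ∧ ∀ a b c : G, r b c → r (a * b) (a * c) := by
  refine ⟨fun a b => a⁻¹ * b ∈ S, ?_, fun a b c h => by simpa [mul_assoc] using h⟩
  exact
    { trichotomous := fun a b hab hba => by
        by_contra hne
        rcases hS.2 (a⁻¹ * b) trivial (by rwa [ne_eq, inv_mul_eq_one]) with h | h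
        · exact hab h
        · exact hba (by simpa using h)
      irrefl := fun a ha => hS.1 (by rwa [inv_mul_cancel] at ha)
      trans := fun a b c hab hbc => by simpa [mul_assoc] using S.mul_mem hab hbc }

theorem exists_isConeOn_univ (h : ∀ F : Finset G, ∃ S : Subsemigroup G, S.IsConeOn F) :
    ∃ S : Subsemigroup G, S.IsConeOn Set.univ := by
  classical
  -- `K F` consists of the indicator functions of the subsemigroups `S` with `S.IsConeOn F`.
  let K (F : Finset G) : Set (G → Bool) :=
    {P | P 1 = false} ∩ (⋂ (g) (h), {P | P g → P h → P (g * h)}) ∩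
      ⋂ g ∈ F, {P | g ≠ 1 → P g ∨ P g⁻¹}
  have hK_closed (F : Finset G) : IsClosed (K F) := by
    refine .inter (.inter ?_ (isClosed_iInter fun g => isClosed_iInter fun h => ?_))
      (isClosed_biInter fun g _ => ?_)
    · exact (isClosed_discrete {false}).preimage (f := fun P : G → Bool => P 1) (by fun_prop)
    · exact (isClosed_discrete {x : Bool × Bool × Bool | x.1 → x.2.1 → x.2.2}).preimage
        (f := fun P : G → Bool => (P g, P h, P (g * h))) (by fun_prop)
    · exact (isClosed_discrete {x : Bool × Bool | g ≠ 1 → x.1 ∨ x.2}).preimage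
        (f := fun P : G → Bool => (P g, P g⁻¹)) (by fun_prop)
  have hK_nonempty (F : Finset G) : (K F).Nonempty := by
    obtain ⟨S, hS1, hS⟩ := h F
    refine ⟨fun g => decide (g ∈ S), ⟨by simpa using hS1, ?_⟩, ?_⟩
    · simp only [Set.mem_iInter, Set.mem_ofPred_eq, decide_eq_true_eq]
      exact fun g h => S.mul_mem
    · simpa using hS
  have hK_anti : Antitone K := fun F F' hFF' =>
    Set.inter_subset_inter_right _ (Set.biInter_subset_biInter_left hFF')
  obtain ⟨P, hP⟩ := IsCompact.nonempty_iInter_of_directed_nonempty_isCompact_isClosed K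
    hK_anti.directed_ge hK_nonempty (fun F => (hK_closed F).isCompact) hK_closed
  have hPK (F : Finset G) : P ∈ K F := Set.mem_iInter.1 hP F
  have hmul : ∀ g h, P g → P h → P (g * h) := by simpa using (hPK ∅).1.2
  exact ⟨⟨{g | P g}, hmul _ _⟩, by simpa using (hPK ∅).1.1,
    fun g _ hg => by simpa [hg] using (hPK {g}).2⟩

section lexCone

variable {M : Type*} [CommGroup M] [LinearOrder M] [IsOrderedMonoid M] {H : Subgroup G}

def lexCone (φ : H →* M) (S : Subsemigroup G) : Subsemigroup G where
  carrier := {g | ∃ x : H, (x : G) = g ∧ (1 < φ x ∨ φ x = 1 ∧ g ∈ S)}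
  mul_mem' := by
    rintro _ _ ⟨x, rfl, hx⟩ ⟨y, rfl, hy⟩
    refine ⟨x * y, rfl, ?_⟩
    rcases hx with hx | ⟨hx, hxS⟩ <;> rcases hy with hy | ⟨hy, hyS⟩
    · exact .inl (by simpa using one_lt_mul'' hx hy)
    · exact .inl (by simpa [hy] using hx)
    · exact .inl (by simpa [hx] using hy)
    · exact .inr ⟨by simp [hx, hy], S.mul_mem hxS hyS⟩

theorem one_notMem_lexCone (φ : H →* M) {S : Subsemigroup G} (hS : (1 : G) ∉ S) :
    (1 : G) ∉ lexCone φ S := by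
  rintro ⟨x, hx, h⟩
  obtain rfl : x = 1 := Subtype.ext hx
  simp_all

theorem lexCone_total (φ : H →* M) (S : Subsemigroup G) (x : H)
    (hx : φ x = 1 → (x : G) ∈ S ∨ (x : G)⁻¹ ∈ S) :
    (x : G) ∈ lexCone φ S ∨ (x : G)⁻¹ ∈ lexCone φ S := by
  rcases lt_trichotomy (φ x) 1 with hlt | heq | hgt
  · exact .inr ⟨x⁻¹, rfl, .inl (by simpa using hlt)⟩
  · rcases hx heq with h | h
    · exact .inl ⟨x, rfl, .inr ⟨heq, h⟩⟩
    · exact .inr ⟨x⁻¹, rfl, .inr ⟨by simp [heq], h⟩⟩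
  · exact .inl ⟨x, rfl, .inl hgt⟩

end lexCone

theorem exists_isConeOn_of_locallyIndicable (hG : LocallyIndicable G) (F : Finset G) :
    ∃ S : Subsemigroup G, S.IsConeOn F := by
  classical
  induction F using Finset.strongInduction with
  | H F ih =>
  by_cases hF : ∀ g ∈ F, g = 1
  · exact ⟨⊥, notMem_bot, fun g hg hg1 => (hg1 (hF g hg)).elim⟩
  set H := Subgroup.closure (F : Set G)
  have hH : H ≠ ⊥ := by simpa [H, Subgroup.closure_eq_bot_iff, Set.subset_def] using hF
  obtain ⟨φ, hφ⟩ := hG H inferInstance hH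
  have hφ1 : φ ≠ 1 := fun h => by simpa [h, ← ofAdd_zero] using hφ (.ofAdd 1)
  set K := φ.ker.map H.subtype
  obtain ⟨S, hS1, hS⟩ := ih (F.filter (· ∈ K))
    (Finset.filter_ssubset.2 (Subgroup.exists_mem_notMem_map_ker_of_ne_one hφ1))
  refine ⟨lexCone φ S, one_notMem_lexCone φ hS1, fun g hg hg1 => ?_⟩
  refine lexCone_total φ S ⟨g, Subgroup.subset_closure hg⟩ fun hker => hS g ?_ hg1
  exact Finset.mem_filter.2 ⟨hg, Subgroup.mem_map.2 ⟨_, hker, rfl⟩⟩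

end Subsemigroup

/-- A locally indicable group (every nontrivial finitely generated subgroup surjects
onto `ℤ`) admits a left-invariant linear order: a strict total order `r` such that
`r b c → r (a * b) (a * c)` for all `a b c`. -/
theorem locally_indicable_left_orderable {G : Type*} [Group G]
    (hli : ∀ H : Subgroup G, Group.FG H → H ≠ ⊥ →
      ∃ φ : H →* Multiplicative ℤ, Function.Surjective φ) :
    ∃ r : G → G → Prop, IsStrictTotalOrder G r ∧
      ∀ a b c : G, r b c → r (a * b) (a * c) := by
  obtain ⟨S, hS⟩ := Subsemigroup.exists_isConeOn_univ
    (Subsemigroup.exists_isConeOn_of_locallyIndicable hli)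
  exact hS.exists_leftInvariant_strictTotalOrder
end

section
/- The group presented on generators x₁, x₂, x₃, … (indexed by the positive integers) together with t and h, with defining relators t xᵢ t⁻¹ xᵢ⁻¹ and h xᵢ h⁻¹ x_{i+1}⁻¹ for all i ≥ 1, is isomorphic to the group presented on three generators a, t, h with defining relators the commutators [t, hⁱ a h⁻ⁱ] for all integers i ≥ 0 (the group ℤ • ℤ). -/
open scoped commutatorElement

/-- Generators of the first presentation: `Sum.inl i` is the generator `x_{i+1}`
(for `i : ℕ`, so that the generators are `x₁, x₂, …`), `Sum.inr false` is `t`,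
and `Sum.inr true` is `h`. -/
abbrev GoGGen : Type := ℕ ⊕ Bool

/-- Relators `t xᵢ t⁻¹ xᵢ⁻¹` and `h xᵢ h⁻¹ x_{i+1}⁻¹` for all `i ≥ 1`. -/
def GoGRels : Set (FreeGroup GoGGen) :=
  { r | (∃ i : ℕ, r = ⁅FreeGroup.of ((Sum.inr false : GoGGen)), FreeGroup.of ((Sum.inl i : GoGGen))⁆) ∨
        (∃ i : ℕ, r = FreeGroup.of ((Sum.inr true : GoGGen)) * FreeGroup.of ((Sum.inl i : GoGGen)) *
          (FreeGroup.of ((Sum.inr true : GoGGen)))⁻¹ * (FreeGroup.of ((Sum.inl (i + 1) : GoGGen)))⁻¹) }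

/-- Generators of the group `ℤ • ℤ`: `a`, `t`, `h`. -/
inductive ZbulZGen3 : Type
  | a : ZbulZGen3
  | t : ZbulZGen3
  | h : ZbulZGen3

/-- The defining relators of `ℤ • ℤ`: the commutators `⁅t, hⁱ a h⁻ⁱ⁆` for `i ≥ 0`. -/
def ZbulZRels3 : Set (FreeGroup ZbulZGen3) :=
  { r | ∃ i : ℕ, r = ⁅FreeGroup.of ZbulZGen3.t,
      (FreeGroup.of ZbulZGen3.h) ^ i * FreeGroup.of ZbulZGen3.a *
        ((FreeGroup.of ZbulZGen3.h) ^ i)⁻¹⁆ }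

/-!
The generators `xᵢ₊₁` of the first presentation are redundant: its second family of relators
forces `xᵢ₊₁ = hⁱ x₁ h⁻ⁱ`, and after this Tietze substitution (with `a := x₁`) the first family
becomes exactly `⁅t, hⁱ a h⁻ⁱ⁆`. So `xᵢ₊₁ ↦ hⁱ a h⁻ⁱ` and `a ↦ x₁` (fixing `t` and `h`) define
mutually inverse homomorphisms.
-/

open PresentedGroup

theorem pow_mul_mul_inv_pow_eq_of_conj_eq_succ {G : Type*} [Group G] {g : G} {x : ℕ → G}
    (hx : ∀ i, g * x i * g⁻¹ = x (i + 1)) (i : ℕ) : g ^ i * x 0 * (g ^ i)⁻¹ = x i := by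
  induction i with
  | zero => simp
  | succ i ih => rw [← hx i, ← ih, pow_succ']; group

namespace ZbulZ

def hConjA (i : ℕ) : PresentedGroup ZbulZRels3 :=
  of ZbulZGen3.h ^ i * of ZbulZGen3.a * (of ZbulZGen3.h ^ i)⁻¹

def genImage : GoGGen → PresentedGroup ZbulZRels3
  | Sum.inl i => hConjA i
  | Sum.inr false => of ZbulZGen3.t
  | Sum.inr true => of ZbulZGen3.h

theorem commutatorElement_t_hConjA_eq_one (i : ℕ) :
    ⁅(of ZbulZGen3.t : PresentedGroup ZbulZRels3), hConjA i⁆ = 1 := by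
  have h := one_of_mem (rels := ZbulZRels3) ⟨i, rfl⟩
  rwa [map_commutatorElement, map_mul, map_mul, map_inv, map_pow] at h

theorem lift_genImage_eq_one : ∀ r ∈ GoGRels, FreeGroup.lift genImage r = 1 := by
  rintro r (⟨i, rfl⟩ | ⟨i, rfl⟩)
  · simpa only [map_commutatorElement, FreeGroup.lift_apply_of, genImage]
      using commutatorElement_t_hConjA_eq_one i
  · simp only [map_mul, map_inv, FreeGroup.lift_apply_of, genImage, hConjA]
    group

def ofGoG : PresentedGroup GoGRels →* PresentedGroup ZbulZRels3 :=
  toGroup lift_genImage_eq_one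

end ZbulZ

namespace GoG

theorem h_conj_x (i : ℕ) :
    (of (Sum.inr true) : PresentedGroup GoGRels) * of (Sum.inl i) * (of (Sum.inr true))⁻¹ =
      of (Sum.inl (i + 1)) := by
  rw [← mul_inv_eq_one]
  exact one_of_mem (Or.inr ⟨i, rfl⟩)

theorem hpow_conj_x_zero (i : ℕ) :
    (of (Sum.inr true) : PresentedGroup GoGRels) ^ i * of (Sum.inl 0) *
      (of (Sum.inr true) ^ i)⁻¹ = of (Sum.inl i) :=
  pow_mul_mul_inv_pow_eq_of_conj_eq_succ h_conj_x i

def genImage : ZbulZGen3 → PresentedGroup GoGRels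
  | ZbulZGen3.a => of (Sum.inl 0)
  | ZbulZGen3.t => of (Sum.inr false)
  | ZbulZGen3.h => of (Sum.inr true)

theorem lift_genImage_eq_one : ∀ r ∈ ZbulZRels3, FreeGroup.lift genImage r = 1 := by
  rintro r ⟨i, rfl⟩
  simp only [map_commutatorElement, map_mul, map_inv, map_pow, FreeGroup.lift_apply_of, genImage,
    hpow_conj_x_zero]
  exact one_of_mem (Or.inl ⟨i, rfl⟩)

def ofZbulZ : PresentedGroup ZbulZRels3 →* PresentedGroup GoGRels :=
  toGroup lift_genImage_eq_one

theorem ofZbulZ_comp_ofGoG : ofZbulZ.comp ZbulZ.ofGoG = MonoidHom.id _ := by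
  refine PresentedGroup.ext fun x => ?_
  rcases x with i | _ | _ <;>
    simp [ofZbulZ, ZbulZ.ofGoG, ZbulZ.genImage, ZbulZ.hConjA, genImage, hpow_conj_x_zero]

theorem ofGoG_comp_ofZbulZ : ZbulZ.ofGoG.comp ofZbulZ = MonoidHom.id _ := by
  refine PresentedGroup.ext fun x => ?_
  cases x <;> simp [ofZbulZ, ZbulZ.ofGoG, ZbulZ.genImage, ZbulZ.hConjA, genImage]

def mulEquivZbulZ : PresentedGroup GoGRels ≃* PresentedGroup ZbulZRels3 :=
  MonoidHom.toMulEquiv ZbulZ.ofGoG ofZbulZ ofZbulZ_comp_ofGoG ofGoG_comp_ofZbulZ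

end GoG

/-- The group `⟨x₁, x₂, …, t, h ∣ t xᵢ t⁻¹ = xᵢ, h xᵢ h⁻¹ = x_{i+1} (i ≥ 1)⟩` is
isomorphic to `ℤ • ℤ = ⟨a, t, h ∣ [t, hⁱ a h⁻ⁱ] = 1 (i ≥ 0)⟩`. -/
theorem graph_of_groups_presentation_iso_zbulz :
    Nonempty (PresentedGroup GoGRels ≃* PresentedGroup ZbulZRels3) :=
  ⟨GoG.mulEquivZbulZ⟩
end

section
/- The group presented on five generators a₁, b₁, a₂, b₂, t with defining relators [a₁, b₁], [a₂, b₂], a₁a₂⁻¹, and t b₁ t⁻¹ b₂⁻¹ is isomorphic to the group presented on three generators a, b, t with defining relators [a, b] and [a, t b t⁻¹] (the group ℤ □ ℤ). -/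
/-! The relators `a₁a₂⁻¹` and `t b₁ t⁻¹ b₂⁻¹` express `a₂` and `b₂` through `a₁, b₁, t`.
Eliminating these two generators by Tietze transformations turns the remaining relator `[a₂, b₂]`
into `[a₁, t b₁ t⁻¹]`, which leaves exactly the presentation of `ℤ □ ℤ`. -/

open scoped commutatorElement

/-- Relators of the graph-of-groups presentation of `ℤ □ ℤ`, on five generators
`a₁ = of 0`, `b₁ = of 1`, `a₂ = of 2`, `b₂ = of 3`, `t = of 4`:
`[a₁,b₁]`, `[a₂,b₂]`, `a₁a₂⁻¹`, `t b₁ t⁻¹ b₂⁻¹`. -/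
def SqRelsA : Set (FreeGroup (Fin 5)) :=
  { ⁅FreeGroup.of (0 : Fin 5), FreeGroup.of (1 : Fin 5)⁆,
    ⁅FreeGroup.of (2 : Fin 5), FreeGroup.of (3 : Fin 5)⁆,
    FreeGroup.of (0 : Fin 5) * (FreeGroup.of (2 : Fin 5))⁻¹,
    FreeGroup.of (4 : Fin 5) * FreeGroup.of (1 : Fin 5) * (FreeGroup.of (4 : Fin 5))⁻¹ * (FreeGroup.of (3 : Fin 5))⁻¹ }

/-- Generators of `ℤ □ ℤ`: `a`, `b`, `t`. -/
inductive SqGen : Type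
  | a : SqGen
  | b : SqGen
  | t : SqGen

/-- The defining relators of `ℤ □ ℤ`: `[a, b]` and `[a, t b t⁻¹]`. -/
def SqRelsB : Set (FreeGroup SqGen) :=
  { ⁅FreeGroup.of SqGen.a, FreeGroup.of SqGen.b⁆,
    ⁅FreeGroup.of SqGen.a,
      FreeGroup.of SqGen.t * FreeGroup.of SqGen.b * (FreeGroup.of SqGen.t)⁻¹⁆ }

namespace PresentedGroup

variable {α β : Type*} {rels : Set (FreeGroup α)} {rels' : Set (FreeGroup β)}

def mulEquivOfInverseOnGenerators (f : α → PresentedGroup rels')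
    (g : β → PresentedGroup rels) (hf : ∀ r ∈ rels, FreeGroup.lift f r = 1)
    (hg : ∀ r ∈ rels', FreeGroup.lift g r = 1) (hgf : ∀ x, toGroup hg (f x) = of x)
    (hfg : ∀ y, toGroup hf (g y) = of y) : PresentedGroup rels ≃* PresentedGroup rels' :=
  MonoidHom.toMulEquiv (toGroup hf) (toGroup hg)
    (ext fun x => by simp only [MonoidHom.comp_apply, toGroup.of, hgf, MonoidHom.id_apply])
    (ext fun y => by simp only [MonoidHom.comp_apply, toGroup.of, hfg, MonoidHom.id_apply])

end PresentedGroup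

open PresentedGroup

section RelationsA

local notation "a₁" => (PresentedGroup.of 0 : PresentedGroup SqRelsA)
local notation "b₁" => (PresentedGroup.of 1 : PresentedGroup SqRelsA)
local notation "a₂" => (PresentedGroup.of 2 : PresentedGroup SqRelsA)
local notation "b₂" => (PresentedGroup.of 3 : PresentedGroup SqRelsA)
local notation "t" => (PresentedGroup.of 4 : PresentedGroup SqRelsA)

theorem sqRelsA_commute₁ : ⁅a₁, b₁⁆ = 1 :=
  (map_commutatorElement _ _ _).symm.trans (one_of_mem (Or.inl rfl))

theorem sqRelsA_commute₂ : ⁅a₂, b₂⁆ = 1 :=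
  (map_commutatorElement _ _ _).symm.trans (one_of_mem (Or.inr (Or.inl rfl)))

theorem sqRelsA_a₁_eq_a₂ : a₁ = a₂ :=
  mk_eq_mk_of_mul_inv_mem (Or.inr (Or.inr (Or.inl rfl)))

theorem sqRelsA_conj_b₁ : t * b₁ * t⁻¹ = b₂ := by
  have h := mk_eq_mk_of_mul_inv_mem (rels := SqRelsA) (Or.inr (Or.inr (Or.inr rfl)))
  rwa [map_mul, map_mul, map_inv] at h

end RelationsA

section RelationsB

local notation "a" => (PresentedGroup.of SqGen.a : PresentedGroup SqRelsB)
local notation "b" => (PresentedGroup.of SqGen.b : PresentedGroup SqRelsB)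
local notation "t" => (PresentedGroup.of SqGen.t : PresentedGroup SqRelsB)

theorem sqRelsB_commute : ⁅a, b⁆ = 1 :=
  (map_commutatorElement _ _ _).symm.trans (one_of_mem (Or.inl rfl))

theorem sqRelsB_commute_conj : ⁅a, t * b * t⁻¹⁆ = 1 := by
  have h := one_of_mem (rels := SqRelsB) (Or.inr rfl)
  rwa [map_commutatorElement, map_mul, map_mul, map_inv] at h

end RelationsB

def sqGenAToB : Fin 5 → PresentedGroup SqRelsB
  | 0 => of .a
  | 1 => of .b
  | 2 => of .a
  | 3 => of .t * of .b * (of .t)⁻¹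
  | 4 => of .t

def sqGenBToA : SqGen → PresentedGroup SqRelsA
  | .a => of 0
  | .b => of 1
  | .t => of 4

theorem lift_sqGenAToB_eq_one : ∀ r ∈ SqRelsA, FreeGroup.lift sqGenAToB r = 1 := by
  rintro r (rfl | rfl | rfl | rfl) <;>
    simp only [map_commutatorElement, map_mul, map_inv, FreeGroup.lift_apply_of, sqGenAToB]
  · exact sqRelsB_commute
  · exact sqRelsB_commute_conj
  · exact mul_inv_cancel _
  · exact mul_inv_cancel _

theorem lift_sqGenBToA_eq_one : ∀ r ∈ SqRelsB, FreeGroup.lift sqGenBToA r = 1 := by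
  rintro r (rfl | rfl) <;>
    simp only [map_commutatorElement, map_mul, map_inv, FreeGroup.lift_apply_of, sqGenBToA]
  · exact sqRelsA_commute₁
  · rw [sqRelsA_conj_b₁, sqRelsA_a₁_eq_a₂]
    exact sqRelsA_commute₂

theorem toGroup_sqGenAToB (x : Fin 5) :
    toGroup lift_sqGenBToA_eq_one (sqGenAToB x) = of x := by
  fin_cases x <;> simp only [sqGenAToB, map_mul, map_inv, toGroup.of, sqGenBToA]
  · rfl
  · rfl
  · exact sqRelsA_a₁_eq_a₂
  · exact sqRelsA_conj_b₁
  · rfl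

theorem toGroup_sqGenBToA (y : SqGen) :
    toGroup lift_sqGenAToB_eq_one (sqGenBToA y) = of y := by
  cases y <;> rfl

/-- The group `⟨a₁, b₁, a₂, b₂, t ∣ [a₁,b₁], [a₂,b₂], a₁ = a₂, t b₁ t⁻¹ = b₂⟩` is
isomorphic to `ℤ □ ℤ = ⟨a, b, t ∣ [a,b] = [a, tbt⁻¹] = 1⟩`. -/
theorem square_product_presentation_simplification :
    Nonempty (PresentedGroup SqRelsA ≃* PresentedGroup SqRelsB) :=
  ⟨mulEquivOfInverseOnGenerators sqGenAToB sqGenBToA lift_sqGenAToB_eq_one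
    lift_sqGenBToA_eq_one toGroup_sqGenAToB toGroup_sqGenBToA⟩
end

section
/- Let X be a connected median graph on a vertex set V. Then there exist an index type ι and a map f : V → ℓ²(ι, ℝ) such that for all vertices x, y one has ‖f(x) − f(y)‖² = d(x, y), where d is the graph distance. In particular, X admits a Lipschitz embedding into a Hilbert space with compression exponent 1/2, so the Hilbert space compression of a median graph is at least 1/2. -/
/-- A connected graph is median if every triple of vertices admits a unique median
point, i.e. a vertex lying on geodesics between each pair of the triple. -/
def IsMedianGraph {V : Type u} (X : SimpleGraph V) : Prop :=
  X.Connected ∧ ∀ x₁ x₂ x₃ : V, ∃! m : V,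
    X.dist x₁ x₂ = X.dist x₁ m + X.dist m x₂ ∧
    X.dist x₁ x₃ = X.dist x₁ m + X.dist m x₃ ∧
    X.dist x₂ x₃ = X.dist x₂ m + X.dist m x₃

/-!
For an edge `ab` of a median graph, the set `W(a, b)` of vertices nearer to `a` than to `b` is
convex, and its complement is `W(b, a)`. Convexity is proved on a counterexample `w` minimising
`d(w, a)`: medians produce two neighbours of `w` in `W(a, b)` whose median with `a` is a closer
counterexample, unless the graph contains an induced `K₂,₃`, which uniqueness of medians forbids.

A halfspace (convex set with convex complement) containing `x` but not its neighbour `x'` is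
`W(x, x')`, so stepping along a geodesic shows that exactly `d(x, y)` halfspaces contain `x` but
not `y`. The map `x ↦ 2^{-1/2} (𝟙{A ∋ x} - 𝟙{A ∋ o})` into `ℓ²(halfspaces)` then satisfies
`‖f x - f y‖² = (d(x, y) + d(y, x)) / 2 = d(x, y)`.
-/

open Set

namespace SimpleGraph

variable {V : Type*} (G : SimpleGraph V)

def IsConvex (A : Set V) : Prop :=
  ∀ ⦃x y z⦄, x ∈ A → y ∈ A → G.dist x y = G.dist x z + G.dist z y → z ∈ A

def IsHalfspace (A : Set V) : Prop :=
  G.IsConvex A ∧ G.IsConvex Aᶜ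

def nearerTo (a b : V) : Set V :=
  {z | G.dist z a < G.dist z b}

variable {G}

theorem Connected.exists_adj_dist_add_one (hG : G.Connected) {u v : V} (huv : u ≠ v) :
    ∃ w, G.Adj u w ∧ G.dist w v + 1 = G.dist u v := by
  obtain ⟨p, hp⟩ := hG.exists_walk_length_eq_dist u v
  cases p with
  | nil => exact absurd rfl huv
  | @cons _ w _ huw q =>
    refine ⟨w, huw, le_antisymm ?_ ?_⟩
    · have := dist_le q
      rw [Walk.length_cons] at hp
      omega
    · have := hG.dist_triangle (u := u) (v := w) (w := v)
      rw [dist_eq_one_iff_adj.mpr huw] at this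
      omega

theorem Connected.dist_eq_add_of_dist_eq_add (hG : G.Connected) {u v w p : V}
    (hw : G.dist u v = G.dist u w + G.dist w v) (hp : G.dist u w = G.dist u p + G.dist p w) :
    G.dist u v = G.dist u p + G.dist p v := by
  have := hG.dist_triangle (u := u) (v := p) (w := v)
  have := hG.dist_triangle (u := p) (v := w) (w := v)
  omega

end SimpleGraph

namespace IsMedianGraph

open SimpleGraph

variable {V : Type*} {X : SimpleGraph V} (hX : IsMedianGraph X)
include hX

theorem dist_ne_of_adj {a b : V} (hab : X.Adj a b) (z : V) : X.dist z a ≠ X.dist z b := by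
  obtain ⟨m, ⟨hzam, hzbm, habm⟩, -⟩ := hX.2 z a b
  rw [dist_eq_one_iff_adj.mpr hab] at habm
  simp only [X.dist_comm] at *
  omega

theorem dist_eq_add_one_or {a b : V} (hab : X.Adj a b) (z : V) :
    X.dist z b = X.dist z a + 1 ∨ X.dist z a = X.dist z b + 1 := by
  have := hab.diff_dist_adj (u := z)
  have := hX.dist_ne_of_adj hab z
  omega

theorem compl_nearerTo {a b : V} (hab : X.Adj a b) : (X.nearerTo a b)ᶜ = X.nearerTo b a := by
  ext z
  simp only [nearerTo, mem_compl_iff, mem_ofPred_eq, not_lt]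
  have := hX.dist_eq_add_one_or hab z
  omega

-- no induced `K₂,₃`
theorem eq_of_dist_eq_one_of_dist_eq_two {x₁ x₂ x₃ w s : V}
    (h₁₂ : X.dist x₁ x₂ = 2) (h₁₃ : X.dist x₁ x₃ = 2) (h₂₃ : X.dist x₂ x₃ = 2)
    (hw₁ : X.dist x₁ w = 1) (hw₂ : X.dist x₂ w = 1) (hw₃ : X.dist x₃ w = 1)
    (hs₁ : X.dist x₁ s = 1) (hs₂ : X.dist x₂ s = 1) (hs₃ : X.dist x₃ s = 1) : w = s := by
  refine (hX.2 x₁ x₂ x₃).unique ?_ ?_ <;> simp only [X.dist_comm] at * <;> omega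

theorem exists_closer_or_dist_eq_add {a b u w : V} (hab : X.Adj a b) (hw : w ∉ X.nearerTo a b) :
    (∃ p ∉ X.nearerTo a b, X.dist u w = X.dist u p + X.dist p w ∧ X.dist p a < X.dist w a) ∨
      X.dist u b = X.dist u w + X.dist w b := by
  obtain ⟨p, ⟨hup, hub, hwb⟩, -⟩ := hX.2 u w b
  rcases eq_or_ne p w with rfl | hpw
  · exact .inr hub
  have hpw := hX.1.pos_dist_of_ne hpw
  have := hX.1.dist_triangle (u := w) (v := p) (w := a)
  have := hX.1.dist_triangle (u := p) (v := b) (w := a)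
  have := dist_eq_one_iff_adj.mpr hab
  have := hX.dist_eq_add_one_or hab w
  simp only [nearerTo, mem_ofPred_eq, not_lt] at hw ⊢
  refine .inl ⟨p, ?_, hup, ?_⟩ <;> simp only [X.dist_comm] at * <;> omega

theorem exists_neighbor_nearerTo {a b u w : V} (hab : X.Adj a b) (hu : u ∈ X.nearerTo a b)
    (hw : w ∉ X.nearerTo a b) (hub : X.dist u b = X.dist u w + X.dist w b) :
    ∃ m ∈ X.nearerTo a b,
      X.dist w m = 1 ∧ X.dist u w = X.dist u m + 1 ∧ X.dist m a + 1 = X.dist w a := by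
  obtain ⟨m, ⟨hum, hua, hwa⟩, -⟩ := hX.2 u w a
  have := hX.1.dist_triangle (u := u) (v := m) (w := b)
  have := hX.dist_eq_add_one_or hab u
  have := hX.dist_eq_add_one_or hab w
  simp only [nearerTo, mem_ofPred_eq, not_lt] at hu hw ⊢
  refine ⟨m, ?_, ?_, ?_, ?_⟩ <;> simp only [X.dist_comm] at * <;> omega

theorem exists_closer_of_dist_eq_two {a b w m₁ m₂ : V} (hab : X.Adj a b)
    (hm₁ : m₁ ∈ X.nearerTo a b) (hm₂ : m₂ ∈ X.nearerTo a b) (hw : w ∉ X.nearerTo a b)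
    (hwm₁ : X.dist w m₁ = 1) (hwm₂ : X.dist w m₂ = 1) (hm₁m₂ : X.dist m₁ m₂ = 2)
    (hm₁a : X.dist m₁ a + 1 = X.dist w a) (hm₂a : X.dist m₂ a + 1 = X.dist w a) :
    ∃ s ∉ X.nearerTo a b, X.dist m₁ m₂ = X.dist m₁ s + X.dist s m₂ ∧ X.dist s a < X.dist w a := by
  obtain ⟨s, ⟨hm₁s, hm₁sa, hm₂sa⟩, -⟩ := hX.2 m₁ m₂ a
  have hs₁ : X.dist m₁ s = 1 ∧ X.dist m₂ s = 1 := by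
    simp only [X.dist_comm] at *; omega
  -- if `s ∈ W(a, b)`, then `w` and `s` are common neighbours of `m₁`, `m₂` and `med(s, w, b)`
  refine ⟨s, fun hs => ?_, hm₁s, by omega⟩
  obtain ⟨t, ⟨hst, hsb, hwb⟩, -⟩ := hX.2 s w b
  have := hX.1.dist_triangle (u := s) (v := m₁) (w := w)
  have := hX.1.dist_triangle (u := w) (v := s) (w := a)
  have := hX.1.dist_triangle (u := s) (v := a) (w := b)
  have := hX.1.dist_triangle (u := m₁) (v := t) (w := b)
  have := hX.1.dist_triangle (u := m₂) (v := t) (w := b)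
  have := hX.1.dist_triangle (u := m₁) (v := w) (w := t)
  have := hX.1.dist_triangle (u := m₂) (v := w) (w := t)
  have := dist_eq_one_iff_adj.mpr hab
  simp only [nearerTo, mem_ofPred_eq, not_lt] at hm₁ hm₂ hw hs
  simp only [X.dist_comm] at *
  have hwt : X.dist w t = 1 ∧ X.dist s t = 1 := by omega
  have hm₁t : X.dist m₁ t = 2 := by omega
  have hm₂t : X.dist m₂ t = 2 := by omega
  have hws : w = s := by
    apply hX.eq_of_dist_eq_one_of_dist_eq_two hm₁m₂ hm₁t hm₂t <;> grind [SimpleGraph.dist_comm]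
  subst hws
  omega

theorem isConvex_nearerTo {a b : V} (hab : X.Adj a b) : X.IsConvex (X.nearerTo a b) := by
  intro u v w hu hv huv
  induction hn : X.dist w a using Nat.strong_induction_on generalizing u v w with
  | _ n IH =>
    by_contra hw
    have no_closer : ∀ {u v p}, u ∈ X.nearerTo a b → v ∈ X.nearerTo a b →
        X.dist u v = X.dist u p + X.dist p v → p ∉ X.nearerTo a b → X.dist p a < n → False :=
      fun hu hv hp hpN hpa => hpN (IH _ hpa hu hv hp rfl)
    obtain ⟨p, hpN, hup, hpa⟩ | hub := hX.exists_closer_or_dist_eq_add (u := u) hab hw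
    · exact no_closer hu hv (hX.1.dist_eq_add_of_dist_eq_add huv hup) hpN (hn ▸ hpa)
    obtain ⟨p, hpN, hvp, hpa⟩ | hvb := hX.exists_closer_or_dist_eq_add (u := v) hab hw
    · refine no_closer hv hu ?_ hpN (hn ▸ hpa)
      exact hX.1.dist_eq_add_of_dist_eq_add (by simp only [X.dist_comm] at huv ⊢; omega) hvp
    obtain ⟨m₁, hm₁, hwm₁, hum₁, hm₁a⟩ := hX.exists_neighbor_nearerTo hab hu hw hub
    obtain ⟨m₂, hm₂, hwm₂, hvm₂, hm₂a⟩ := hX.exists_neighbor_nearerTo hab hv hw hvb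
    have hm₁m₂ : X.dist m₁ m₂ = 2 := by
      have := hX.1.dist_triangle (u := m₁) (v := w) (w := m₂)
      have := hX.1.dist_triangle (u := u) (v := m₁) (w := v)
      have := hX.1.dist_triangle (u := m₁) (v := m₂) (w := v)
      have hne : X.dist m₁ m₂ ≠ 1 := fun h => hX.dist_ne_of_adj (dist_eq_one_iff_adj.mp h) a
        (by rw [X.dist_comm, X.dist_comm (u := a)]; omega)
      simp only [X.dist_comm] at *
      omega
    obtain ⟨s, hsN, hm₁s, hsa⟩ :=
      hX.exists_closer_of_dist_eq_two hab hm₁ hm₂ hw hwm₁ hwm₂ hm₁m₂ hm₁a hm₂a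
    exact no_closer hm₁ hm₂ hm₁s hsN (hn ▸ hsa)

theorem isHalfspace_nearerTo {a b : V} (hab : X.Adj a b) : X.IsHalfspace (X.nearerTo a b) :=
  ⟨hX.isConvex_nearerTo hab, hX.compl_nearerTo hab ▸ hX.isConvex_nearerTo hab.symm⟩

theorem subset_nearerTo {A : Set V} (hA : X.IsConvex A) {a b : V} (hab : X.Adj a b)
    (ha : a ∈ A) (hb : b ∉ A) : A ⊆ X.nearerTo a b := by
  intro z hz
  by_contra hzN
  have := hX.dist_eq_add_one_or hab z
  have := dist_eq_one_iff_adj.mpr hab.symm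
  simp only [nearerTo, mem_ofPred_eq, not_lt] at hzN
  exact hb (hA hz ha (by omega))

theorem eq_nearerTo {A : Set V} (hA : X.IsHalfspace A) {a b : V} (hab : X.Adj a b)
    (ha : a ∈ A) (hb : b ∉ A) : A = X.nearerTo a b := by
  refine (hX.subset_nearerTo hA.1 hab ha hb).antisymm ?_
  rw [← compl_subset_compl, hX.compl_nearerTo hab]
  exact hX.subset_nearerTo hA.2 hab.symm hb (not_not_intro ha)

theorem encard_separating (x y : V) :
    {A : {A : Set V // X.IsHalfspace A} | x ∈ A.1 ∧ y ∉ A.1}.encard = X.dist x y := by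
  induction hn : X.dist x y generalizing x with
  | zero =>
    obtain rfl := hX.1.dist_eq_zero_iff.mp hn
    simp
  | succ n IH =>
    have hxy : x ≠ y := by rintro rfl; simp at hn
    obtain ⟨x', hxx', hx'y⟩ := hX.1.exists_adj_dist_add_one hxy
    have hx' : X.dist x x' = 1 := dist_eq_one_iff_adj.mpr hxx'
    let H : {A : Set V // X.IsHalfspace A} := ⟨_, hX.isHalfspace_nearerTo hxx'⟩
    have hsep : {A : {A : Set V // X.IsHalfspace A} | x ∈ A.1 ∧ y ∉ A.1} =
        insert H {A | x' ∈ A.1 ∧ y ∉ A.1} := by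
      ext ⟨A, hA⟩
      simp only [mem_ofPred_eq, mem_insert_iff, H, Subtype.mk.injEq]
      constructor
      · rintro ⟨hxA, hyA⟩
        by_cases hx'A : x' ∈ A
        · exact .inr ⟨hx'A, hyA⟩
        · exact .inl (hX.eq_nearerTo hA hxx' hxA hx'A)
      · rintro (rfl | ⟨hx'A, hyA⟩)
        · simp only [nearerTo, mem_ofPred_eq, dist_self, hx', X.dist_comm (u := y)]
          omega
        · refine ⟨by_contra fun hxA => ?_, hyA⟩
          exact hA.2 hxA hyA (by omega) hx'A
    have hH : H ∉ {A : {A : Set V // X.IsHalfspace A} | x' ∈ A.1 ∧ y ∉ A.1} := by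
      simp [H, nearerTo, X.dist_comm (u := x'), hx']
    rw [hsep, encard_insert_of_notMem hH, IH x' (by omega), Nat.cast_succ]

end IsMedianGraph

theorem exists_lp_norm_sq_eq_ncard_sdiff_add_ncard_sdiff {V ι : Type*} (S : V → Set ι)
    (hS : ∀ x y, (S x \ S y).Finite) (o : V) :
    ∃ f : V → lp (fun _ : ι => ℝ) 2,
      ∀ x y, ‖f x - f y‖ ^ 2 = (S x \ S y).ncard + (S y \ S x).ncard := by
  let g : V → ι → ℝ := fun x => (S x).indicator 1 - (S o).indicator 1
  have hg (x : V) : Memℓp (g x) 2 := by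
    refine (memℓp_zero (((hS x o).union (hS o x)).subset fun i hi => ?_)).of_exponent_ge
      (by norm_num)
    by_cases hx : i ∈ S x <;> by_cases ho : i ∈ S o <;> simp_all [g]
  refine ⟨fun x => ⟨g x, hg x⟩, fun x y => ?_⟩
  have hsq (i : ι) : (g x i - g y i) ^ 2 =
      (S x \ S y).indicator 1 i + (S y \ S x).indicator 1 i := by
    have : g x i - g y i = (S x).indicator 1 i - (S y).indicator 1 i := by
      simp only [g, Pi.sub_apply]; ring
    by_cases hx : i ∈ S x <;> by_cases hy : i ∈ S y <;> simp [this, hx, hy]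
  have hasSum_indicator (A : Set ι) (hA : A.Finite) :
      HasSum (A.indicator (1 : ι → ℝ)) A.ncard := by
    have := hA.fintype
    rw [← hasSum_subtype_iff_indicator]
    simpa [Pi.one_def, Function.comp_def] using hasSum_fintype (fun _ : A => (1 : ℝ))
  rw [← real_inner_self_eq_norm_sq, lp.inner_eq_tsum]
  simp only [real_inner_self_eq_norm_sq, Real.norm_eq_abs, sq_abs, lp.coeFn_sub, Pi.sub_apply]
  rw [tsum_congr hsq]
  exact ((hasSum_indicator _ (hS x y)).add (hasSum_indicator _ (hS y x))).tsum_eq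

/-- A connected median graph admits a map `f` to a Hilbert space `ℓ²(ι, ℝ)` with
`‖f x - f y‖² = d(x, y)`; in particular its Hilbert space compression is `≥ 1/2`. -/
theorem median_graph_hilbert_compression {V : Type u} (X : SimpleGraph V)
    (hX : IsMedianGraph X) :
    ∃ (ι : Type u) (f : V → lp (fun _ : ι => ℝ) 2),
      ∀ x y : V, ‖f x - f y‖ ^ 2 = (X.dist x y : ℝ) := by
  obtain ⟨o⟩ := hX.1.nonempty
  let S (x : V) : Set {A : Set V // X.IsHalfspace A} := {A | x ∈ A.1}
  have hS (x y : V) : (S x \ S y).encard = X.dist x y := hX.encard_separating x y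
  obtain ⟨f, hf⟩ := exists_lp_norm_sq_eq_ncard_sdiff_add_ncard_sdiff S
    (fun x y => finite_of_encard_eq_coe (hS x y)) o
  -- each wall is counted twice, once by each of its two halfspaces
  refine ⟨_, fun x => (√2)⁻¹ • f x, fun x y => ?_⟩
  rw [← smul_sub, norm_smul, mul_pow, hf, ncard_def, ncard_def, hS, hS, X.dist_comm (u := y)]
  simp only [norm_inv, Real.norm_eq_abs, inv_pow, sq_abs, Real.sq_sqrt zero_le_two,
    ENat.toNat_natCast]
  ring
end

section
/- Fix n ≥ 1 and let V = Fin n × ℕ (the disjoint union of n copies of ℕ, thought of as n rays). Let Hₙ be the set of permutations σ of V for which there exist d : Fin n → ℤ and N : ℕ such that for every i and every k ≥ N, σ(i, k) = (i, k + d(i)) (equality of second coordinates read in ℤ). Then: Hₙ is a subgroup of the permutation group of V; the assignment σ ↦ d is well defined and yields a group homomorphism φ : Hₙ → (Fin n → ℤ, +); the range of φ is exactly { d : Fin n → ℤ | Σᵢ d(i) = 0 }; and the kernel of φ is exactly the set of σ ∈ Hₙ moving only finitely many points. Consequently there is a short exact sequence 1 → S_∞ → Hₙ → ℤ^{n−1}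 → 1. -/
/-!
A permutation eventually translating the rays by `d` maps the points below a level `N` far out
on every ray onto the points below the levels `N + dᵢ`; counting, `n N = Σᵢ (N + dᵢ)`, so
`Σᵢ dᵢ = 0`. Conversely the vectors `eᵢ - eⱼ` span the zero-sum vectors and are realised by
translating the line obtained by gluing ray `i` to ray `j` at their origins. The kernel consists
of the permutations that are eventually the identity, i.e. those of finite support.
-/

/-- `σ` eventually translates the `i`-th ray by `d i`: there is `N` such that for
all `i` and all `k ≥ N`, `σ (i, k) = (i, k + d i)` (second coordinates read in `ℤ`). -/
def EventuallyTranslates {n : ℕ} (σ : Equiv.Perm (Fin n × ℕ)) (d : Fin n → ℤ) : Prop :=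
  ∃ N : ℕ, ∀ (i : Fin n) (k : ℕ), N ≤ k →
    (σ (i, k)).1 = i ∧ ((σ (i, k)).2 : ℤ) = (k : ℤ) + d i

open Equiv Finset

section Rays

variable {ι : Type*}

/-- Rays `i` and `j` glued at their origins into a line, ray `i` being its nonnegative half. -/
def rayLine (i j : ι) : ℤ → ι × ℕ
  | .ofNat k => (i, k)
  | .negSucc k => (j, k)

lemma rayLine_injective {i j : ι} (hij : i ≠ j) : Function.Injective (rayLine i j) := by
  rintro (a | a) (b | b) h <;> simp_all [rayLine]

open Classical in
noncomputable def rayShift {i j : ι} (hij : i ≠ j) : Perm (ι × ℕ) :=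
  (Equiv.addRight (1 : ℤ)).extendDomain (Equiv.ofInjective _ (rayLine_injective hij))

open Classical in
lemma rayShift_rayLine {i j : ι} (hij : i ≠ j) (z : ℤ) :
    rayShift hij (rayLine i j z) = rayLine i j (z + 1) :=
  Perm.extendDomain_apply_image _ _ z

lemma rayShift_left {i j : ι} (hij : i ≠ j) (k : ℕ) : rayShift hij (i, k) = (i, k + 1) :=
  rayShift_rayLine hij k

lemma rayShift_right_succ {i j : ι} (hij : i ≠ j) (k : ℕ) : rayShift hij (j, k + 1) = (j, k) :=
  rayShift_rayLine hij (Int.negSucc (k + 1))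

open Classical in
lemma rayShift_of_ne {i j a : ι} (hij : i ≠ j) (hi : a ≠ i) (hj : a ≠ j) (k : ℕ) :
    rayShift hij (a, k) = (a, k) :=
  Perm.extendDomain_apply_not_subtype _ _ (by rintro ⟨z | z, h⟩ <;> simp_all [rayLine])

def initialSegments [Fintype ι] (L : ι → ℕ) : Finset (ι × ℕ) :=
  (univ.sigma fun i => range (L i)).map (Equiv.sigmaEquivProd ι ℕ).toEmbedding

lemma mem_initialSegments [Fintype ι] {L : ι → ℕ} {p : ι × ℕ} :
    p ∈ initialSegments L ↔ p.2 < L p.1 := by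
  simp [initialSegments, Finset.mem_map_equiv]

lemma card_initialSegments [Fintype ι] (L : ι → ℕ) : #(initialSegments L) = ∑ i, L i := by
  simp [initialSegments]

end Rays

lemma exists_natAbs_le {ι : Type*} [Finite ι] (d : ι → ℤ) : ∃ S : ℕ, ∀ i, (d i).natAbs ≤ S :=
  Finite.exists_le _

section Translations

variable {n : ℕ}

/-- `EventuallyTranslates σ d` unfolds to `∃ N, TranslatesBeyond N σ d`. -/
def TranslatesBeyond (N : ℕ) (σ : Perm (Fin n × ℕ)) (d : Fin n → ℤ) : Prop :=
  ∀ (i : Fin n) (k : ℕ), N ≤ k → (σ (i, k)).1 = i ∧ ((σ (i, k)).2 : ℤ) = (k : ℤ) + d i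

lemma TranslatesBeyond.apply_eq {N : ℕ} {σ : Perm (Fin n × ℕ)} {d : Fin n → ℤ}
    (h : TranslatesBeyond N σ d) {i : Fin n} {k m : ℕ} (hk : N ≤ k) (hm : (m : ℤ) = k + d i) :
    σ (i, k) = (i, m) :=
  Prod.ext (h i k hk).1 (by have := (h i k hk).2; omega)

lemma TranslatesBeyond.mem_initialSegments_iff {N : ℕ} {σ : Perm (Fin n × ℕ)}
    {d : Fin n → ℤ} (h : TranslatesBeyond N σ d) {L L' : Fin n → ℕ} (hL : ∀ i, N ≤ L i)
    (hL' : ∀ i, (L' i : ℤ) = L i + d i) (p : Fin n × ℕ) :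
    p ∈ initialSegments L ↔ σ p ∈ initialSegments L' := by
  obtain ⟨i, k⟩ := p
  simp only [mem_initialSegments]
  by_cases hk : L i ≤ k
  · obtain ⟨h₁, h₂⟩ := h i k (le_trans (hL i) hk)
    rw [h₁]
    have := hL' i
    omega
  · refine iff_of_true (by omega) ?_
    obtain ⟨⟨j, m⟩, hq⟩ : ∃ q, σ (i, k) = q := ⟨_, rfl⟩
    rw [hq]
    change m < L' j
    -- otherwise `(j, m)` is the image of the point `(j, m - d j)` beyond `L j`
    by_contra! hm
    have := hL' j
    obtain ⟨m', hm'⟩ := Int.eq_ofNat_of_zero_le (by omega : 0 ≤ (m : ℤ) - d j)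
    have hσ : σ (j, m') = σ (i, k) := hq ▸ h.apply_eq (by have := hL j; omega) (by omega)
    obtain ⟨rfl, rfl⟩ := Prod.mk.inj (σ.injective hσ)
    omega

lemma eventuallyTranslates_one : EventuallyTranslates (1 : Perm (Fin n × ℕ)) 0 :=
  ⟨0, fun _ _ _ => by simp⟩

namespace EventuallyTranslates

variable {σ τ : Perm (Fin n × ℕ)} {d e : Fin n → ℤ}

lemma mul (hσ : EventuallyTranslates σ d) (hτ : EventuallyTranslates τ e) :
    EventuallyTranslates (σ * τ) (d + e) := by
  obtain ⟨Nσ, hσ⟩ := hσ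
  obtain ⟨Nτ, hτ⟩ := hτ
  obtain ⟨S, hS⟩ := exists_natAbs_le e
  refine ⟨Nσ + Nτ + S, fun i k hk => ?_⟩
  obtain ⟨m, hm⟩ := Int.eq_ofNat_of_zero_le (by have := hS i; omega : 0 ≤ (k : ℤ) + e i)
  obtain ⟨hσ₁, hσ₂⟩ := hσ i m (by have := hS i; omega)
  rw [Perm.mul_apply, TranslatesBeyond.apply_eq hτ (by omega) hm.symm]
  exact ⟨hσ₁, by rw [hσ₂, ← hm, Pi.add_apply]; ring⟩

lemma inv (hσ : EventuallyTranslates σ d) : EventuallyTranslates σ⁻¹ (-d) := by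
  obtain ⟨N, hσ⟩ := hσ
  obtain ⟨S, hS⟩ := exists_natAbs_le d
  refine ⟨N + S, fun i k hk => ?_⟩
  obtain ⟨m, hm⟩ := Int.eq_ofNat_of_zero_le (by have := hS i; omega : 0 ≤ (k : ℤ) - d i)
  rw [Perm.inv_eq_iff_eq.mpr (TranslatesBeyond.apply_eq hσ (by have := hS i; omega)
    (by omega : (k : ℤ) = m + d i)).symm]
  exact ⟨rfl, by rw [← hm, Pi.neg_apply]; ring⟩

lemma unique (hd : EventuallyTranslates σ d) (he : EventuallyTranslates σ e) : d = e := by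
  obtain ⟨Nd, hd⟩ := hd
  obtain ⟨Ne, he⟩ := he
  funext i
  have := (hd i (Nd + Ne) (by omega)).2
  have := (he i (Nd + Ne) (by omega)).2
  omega

lemma sum_eq_zero (hσ : EventuallyTranslates σ d) : ∑ i, d i = 0 := by
  obtain ⟨N, hσ⟩ := hσ
  obtain ⟨S, hS⟩ := exists_natAbs_le d
  set L' : Fin n → ℕ := fun i => ((N + S : ℕ) + d i).toNat
  have hL' : ∀ i, (L' i : ℤ) = (N + S : ℕ) + d i :=
    fun i => Int.toNat_of_nonneg (by have := hS i; omega)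
  have hcard : ∑ _i : Fin n, (N + S) = ∑ i, L' i := by
    rw [← card_initialSegments, ← card_initialSegments]
    exact Finset.card_equiv σ
      (TranslatesBeyond.mem_initialSegments_iff hσ (fun _ => Nat.le_add_right N S) hL')
  have hcast : ∑ _i : Fin n, ((N + S : ℕ) : ℤ) = ∑ i, (((N + S : ℕ) : ℤ) + d i) := by
    simpa only [Nat.cast_sum, hL'] using congrArg (Nat.cast : ℕ → ℤ) hcard
  rwa [Finset.sum_add_distrib, left_eq_add] at hcast

end EventuallyTranslates

lemma eventuallyTranslates_rayShift {i j : Fin n} (hij : i ≠ j) :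
    EventuallyTranslates (rayShift hij) (Pi.single i 1 - Pi.single j 1) := by
  refine ⟨1, fun a k hk => ?_⟩
  rcases eq_or_ne a i with rfl | hai
  · simp [rayShift_left, hij.symm]
  rcases eq_or_ne a j with rfl | haj
  · obtain ⟨k, rfl⟩ := Nat.exists_eq_add_of_le' hk
    simp [rayShift_right_succ, hai]
  · simp [rayShift_of_ne hij hai haj, hai, haj]

lemma eventuallyTranslates_zero_iff {σ : Perm (Fin n × ℕ)} :
    EventuallyTranslates σ 0 ↔ {x : Fin n × ℕ | σ x ≠ x}.Finite := by
  constructor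
  · rintro ⟨N, h⟩
    refine (Set.finite_univ.prod (Set.finite_Iio N)).subset fun ⟨i, k⟩ hx => ⟨trivial, ?_⟩
    by_contra hk
    exact hx (TranslatesBeyond.apply_eq h (not_lt.mp hk) (by simp))
  · intro hfin
    obtain ⟨N, hN⟩ := (hfin.image Prod.snd).bddAbove
    refine ⟨N + 1, fun i k hk => ?_⟩
    have hfix : σ (i, k) = (i, k) := by
      by_contra hmoved
      have := hN ⟨(i, k), hmoved, rfl⟩
      omega
    simp [hfix]

end Translations

lemma eq_sum_smul_single_sub_single {ι R : Type*} [Fintype ι] [DecidableEq ι] [Ring R]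
    {d : ι → R} (hd : ∑ i, d i = 0) (j : ι) :
    d = ∑ i, d i • (Pi.single i 1 - Pi.single j 1 : ι → R) := by
  simp only [smul_sub, Finset.sum_sub_distrib, ← Finset.sum_smul, hd, zero_smul, sub_zero]
  ext k
  simp [Pi.single_apply]

def houghtonGroup (n : ℕ) : Subgroup (Perm (Fin n × ℕ)) where
  carrier := {σ | ∃ d, EventuallyTranslates σ d}
  one_mem' := ⟨0, eventuallyTranslates_one⟩
  mul_mem' := fun ⟨d, hd⟩ ⟨e, he⟩ => ⟨d + e, hd.mul he⟩
  inv_mem' := fun ⟨d, hd⟩ => ⟨-d, hd.inv⟩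

namespace houghtonGroup

variable {n : ℕ}

noncomputable def translation (σ : houghtonGroup n) : Fin n → ℤ :=
  σ.2.choose

lemma eventuallyTranslates_translation (σ : houghtonGroup n) :
    EventuallyTranslates (σ : Perm (Fin n × ℕ)) (translation σ) :=
  σ.2.choose_spec

lemma translation_eq {σ : houghtonGroup n} {d : Fin n → ℤ}
    (h : EventuallyTranslates (σ : Perm (Fin n × ℕ)) d) : translation σ = d :=
  (eventuallyTranslates_translation σ).unique h

noncomputable def translationHom (n : ℕ) : houghtonGroup n →* Multiplicative (Fin n → ℤ) where
  toFun σ := .ofAdd (translation σ)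
  map_one' := congrArg _ (translation_eq eventuallyTranslates_one)
  map_mul' σ τ := congrArg _ (translation_eq
    ((eventuallyTranslates_translation σ).mul (eventuallyTranslates_translation τ)))

lemma ofAdd_mem_range_translationHom_iff_exists {d : Fin n → ℤ} :
    .ofAdd d ∈ (translationHom n).range ↔ ∃ σ, EventuallyTranslates σ d :=
  ⟨fun ⟨σ, hσ⟩ => ⟨σ, Multiplicative.ofAdd.injective hσ ▸ eventuallyTranslates_translation σ⟩,
    fun ⟨σ, h⟩ => ⟨⟨σ, d, h⟩, congrArg Multiplicative.ofAdd (translation_eq h)⟩⟩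

lemma ofAdd_mem_range_translationHom_iff {d : Fin n → ℤ} :
    .ofAdd d ∈ (translationHom n).range ↔ ∑ i, d i = 0 := by
  refine ⟨fun h => ?_, fun hd => ?_⟩
  · obtain ⟨σ, hσ⟩ := ofAdd_mem_range_translationHom_iff_exists.mp h
    exact hσ.sum_eq_zero
  rcases isEmpty_or_nonempty (Fin n) with _ | ⟨⟨j⟩⟩
  · rw [Subsingleton.elim d 0]
    exact one_mem _
  rw [eq_sum_smul_single_sub_single hd j, ofAdd_sum]
  refine prod_mem fun i _ => ?_
  rw [ofAdd_zsmul]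
  refine zpow_mem (ofAdd_mem_range_translationHom_iff_exists.mpr ?_) _
  rcases eq_or_ne i j with rfl | hij
  · exact ⟨1, by simpa using eventuallyTranslates_one⟩
  · exact ⟨_, eventuallyTranslates_rayShift hij⟩

lemma mem_ker_translationHom_iff {σ : houghtonGroup n} :
    σ ∈ (translationHom n).ker ↔ {x : Fin n × ℕ | (σ : Perm (Fin n × ℕ)) x ≠ x}.Finite := by
  rw [MonoidHom.mem_ker, ← eventuallyTranslates_zero_iff]
  exact ⟨fun h => Multiplicative.ofAdd.injective h ▸ eventuallyTranslates_translation σ,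
    fun h => congrArg Multiplicative.ofAdd (translation_eq h)⟩

end houghtonGroup

theorem houghton_short_exact_sequence_general (n : ℕ) :
    ∃ (H : Subgroup (Equiv.Perm (Fin n × ℕ)))
      (φ : H →* Multiplicative (Fin n → ℤ)),
      (∀ σ : Equiv.Perm (Fin n × ℕ),
        σ ∈ H ↔ ∃ d : Fin n → ℤ, EventuallyTranslates σ d) ∧
      (∀ σ : H, EventuallyTranslates (σ : Equiv.Perm (Fin n × ℕ))
        (Multiplicative.toAdd (φ σ))) ∧
      (∀ d : Fin n → ℤ,
        Multiplicative.ofAdd d ∈ φ.range ↔ ∑ i, d i = 0) ∧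
      (∀ σ : H, σ ∈ φ.ker ↔
        {x : Fin n × ℕ | (σ : Equiv.Perm (Fin n × ℕ)) x ≠ x}.Finite) :=
  ⟨houghtonGroup n, houghtonGroup.translationHom n, fun _ => Iff.rfl,
    houghtonGroup.eventuallyTranslates_translation,
    fun _ => houghtonGroup.ofAdd_mem_range_translationHom_iff,
    fun _ => houghtonGroup.mem_ker_translationHom_iff⟩

/-- The Houghton group `Hₙ`: the permutations of the `n` rays `Fin n × ℕ` that
eventually translate each ray form a subgroup of `Equiv.Perm (Fin n × ℕ)`; the
assignment `σ ↦ d` is well defined and gives a homomorphism `φ : Hₙ → ℤⁿ` whose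
range is the zero-sum subgroup `{d ∣ Σᵢ d i = 0} ≅ ℤ^{n-1}` and whose kernel is
the group `S_∞` of finitely supported permutations. Hence there is a short exact
sequence `1 → S_∞ → Hₙ → ℤ^{n-1} → 1`. -/
theorem houghton_short_exact_sequence (n : ℕ) (hn : 1 ≤ n) :
    ∃ (H : Subgroup (Equiv.Perm (Fin n × ℕ)))
      (φ : H →* Multiplicative (Fin n → ℤ)),
      (∀ σ : Equiv.Perm (Fin n × ℕ),
        σ ∈ H ↔ ∃ d : Fin n → ℤ, EventuallyTranslates σ d) ∧
      (∀ σ : H, EventuallyTranslates (σ : Equiv.Perm (Fin n × ℕ))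
        (Multiplicative.toAdd (φ σ))) ∧
      (∀ d : Fin n → ℤ,
        Multiplicative.ofAdd d ∈ φ.range ↔ ∑ i, d i = 0) ∧
      (∀ σ : H, σ ∈ φ.ker ↔
        {x : Fin n × ℕ | (σ : Equiv.Perm (Fin n × ℕ)) x ≠ x}.Finite) :=
  houghton_short_exact_sequence_general n
end
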